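/- The unperturbed learning dynamics converges to an aligned state in finitely many steps: for every initial joint state x there exists a natural number k such that the k-th iterate (F⁰)^k(x) is a fixed point of F⁰; consequently, the only recurrence classes of the unperturbed process are the singleton sets {z} where z is a state in which no proposer is watchful and every proposer's baseline utility equals the utility it receives when all proposers play their baseline actions. -/

import Mathlib

set_option linter.unusedSectionVars false
/-- A two-sided matching market with proposers `P` and acceptors `A`.
`OP i` is proposer `i`'s preference function over `A ∪ {∅}` (where `none` is `∅`),
and `OA j` is acceptor `j`'s preference function over `P ∪ {∅}`. -/
structure Market (P A : Type) [Fintype P] [Fintype A] where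
  OP : P → Option A → ℝ
  OA : A → Option P → ℝ
  OP_inj : ∀ i, Function.Injective (OP i)
  OA_inj : ∀ j, Function.Injective (OA j)
  OP_none : ∀ i, OP i none = 0
  OA_none : ∀ j, OA j none = 0
  OP_pos : ∀ i j, 0 < OP i (some j)
  OA_pos : ∀ j i, 0 < OA j (some i)
  OP_le_one : ∀ i o, OP i o ≤ 1
  OA_le_one : ∀ j o, OA j o ≤ 1

/-- A match: each proposer gets a partner in `A ∪ {∅}`, each acceptor a partner
in `P ∪ {∅}`, consistently. -/
structure Matching (P A : Type) where
  μP : P → Option A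
  μA : A → Option P
  consistent : ∀ i j, μP i = some j ↔ μA j = some i

/-- A match is stable if there is no proposer–acceptor pair who strictly prefer
each other to their assigned partners. -/
def Stable {P A : Type} [Fintype P] [Fintype A] (M : Market P A) (μ : Matching P A) : Prop :=
  ¬ ∃ (i : P) (j : A), M.OP i (some j) > M.OP i (μ.μP i) ∧ M.OA j (some i) > M.OA j (μ.μA j)

variable {P A : Type} [Fintype P] [Fintype A] [DecidableEq P] [DecidableEq A]

/-- Given an action profile `a`, acceptor `j` accepts its most preferred
proposer among those proposing to it (if any). -/
noncomputable def accept (M : Market P A) (a : P → Option A) (j : A) : Option P :=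
  if h : (Finset.univ.filter fun i => a i = some j).Nonempty then
    some (Classical.choose
      ((Finset.univ.filter fun i => a i = some j).exists_max_image
        (fun i => M.OA j (some i)) h))
  else none

theorem accept_spec {M : Market P A} {a : P → Option A} {j : A} {i : P}
    (h : accept M a j = some i) :
    a i = some j ∧ ∀ i', a i' = some j → M.OA j (some i') ≤ M.OA j (some i) := by
  unfold accept at h
  split_ifs at h with hne
  · obtain ⟨hmem, hmax⟩ := Classical.choose_spec
      ((Finset.univ.filter fun i => a i = some j).exists_max_image
        (fun i => M.OA j (some i)) hne)
    have hi : Classical.choose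
        ((Finset.univ.filter fun i => a i = some j).exists_max_image
          (fun i => M.OA j (some i)) hne) = i := Option.some_injective _ h
    rw [hi] at hmem hmax
    refine ⟨by simpa using hmem, fun i' hi' => hmax i' (by simpa using hi')⟩

theorem accept_of_propose {M : Market P A} {a : P → Option A} {j : A} {i : P}
    (h : a i = some j) : ∃ i', accept M a j = some i' := by
  unfold accept
  have hne : (Finset.univ.filter fun i => a i = some j).Nonempty :=
    ⟨i, by simpa using h⟩
  rw [dif_pos hne]
  exact ⟨_, rfl⟩

/-- The match resulting from an action profile `a`. -/
noncomputable def matchOf (M : Market P A) (a : P → Option A) : Matching P A where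
  μP i := (a i).bind fun j => if accept M a j = some i then some j else none
  μA j := accept M a j
  consistent := by
    intro i j
    constructor
    · intro h
      rcases Option.bind_eq_some_iff.mp h with ⟨j', hj', hif⟩
      by_cases hc : accept M a j' = some i
      · rw [if_pos hc] at hif
        exact (Option.some_injective _ hif) ▸ hc
      · rw [if_neg hc] at hif
        exact absurd hif (by simp)
    · intro h
      have hai : a i = some j := (accept_spec h).1
      show (a i).bind _ = some j
      rw [hai]
      simp [h]

/-- The utility of proposer `i` under action profile `a`. -/
noncomputable def util (M : Market P A) (a : P → Option A) (i : P) : ℝ :=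
  M.OP i ((matchOf M a).μP i)

/-- Pure Nash equilibrium: no proposer can strictly increase its utility by a
unilateral deviation. -/
def IsNash (M : Market P A) (a : P → Option A) : Prop :=
  ∀ (i : P) (a' : Option A), util M (Function.update a i a') i ≤ util M a i

/-- The mood of a proposer: content, watchful, or discontent. -/
inductive Mood | C | W | D
deriving DecidableEq

/-- A proposer's state: a mood, a baseline action, and a baseline utility. -/
abbrev LState (P A : Type) := Mood × Option A × ℝ

/-- Joint states are valid when every discontent proposer has baseline action `∅`
and baseline utility `0`. -/
def ValidState {P A : Type} (x : P → LState P A) : Prop :=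
  ∀ i, (x i).1 = Mood.D → (x i).2.1 = none ∧ (x i).2.2 = 0

/-- The unperturbed learning dynamics (experimentation rate `ε = 0`): every
proposer plays its baseline action and updates its state deterministically. -/
noncomputable def F0 (M : Market P A) (x : P → LState P A) : P → LState P A :=
  fun i =>
    let abar : P → Option A := fun k => (x k).2.1
    let u : ℝ := util M abar i
    let ubar : ℝ := (x i).2.2
    match (x i).1 with
    | Mood.C => if ubar ≤ u then (Mood.C, (x i).2.1, u) else (Mood.W, (x i).2.1, ubar)
    | Mood.W => if ubar ≤ u then (Mood.C, (x i).2.1, ubar) else (Mood.D, none, 0)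
    | Mood.D => (Mood.D, none, 0)

/-!
Discontent is absorbing, and a proposer's baseline action changes only when it turns
discontent (in a valid state, as every state is after one step, discontent proposers already
play `∅`). So while nobody turns discontent, the played profile and hence every utility stay
fixed, and against a fixed utility each proposer's state settles within two steps (the
longest runs being `W → C → C` and `C → W → D`). Every two steps therefore either reach a
fixed point or strictly shrink the set of proposers that are not discontent. At a fixed point
nobody is watchful, content proposers have recorded their realized utility, and discontent
ones play `∅` and get `0`.
-/

open Function Finset

theorem Function.exists_isFixedPt_iterate_of_iterate_lt {α : Type*} {f : α → α} {S : Set α}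
    (φ : α → ℕ) (m : ℕ) (hS : Set.MapsTo f^[m] S S)
    (h : ∀ x ∈ S, IsFixedPt f (f^[m] x) ∨ φ (f^[m] x) < φ x) :
    ∀ x ∈ S, ∃ k, IsFixedPt f (f^[k] x) := by
  intro x hx
  induction hn : φ x using Nat.strong_induction_on generalizing x with
  | _ n ih =>
    rcases h x hx with hfix | hlt
    · exact ⟨m, hfix⟩
    · obtain ⟨k, hk⟩ := ih _ (hn ▸ hlt) _ (hS hx) rfl
      exact ⟨k + m, by rwa [iterate_add_apply]⟩

theorem Finset.card_filter_lt_card_filter {ι : Type*} [Fintype ι] {p q : ι → Prop}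
    [DecidablePred p] [DecidablePred q] (hqp : ∀ i, q i → p i) {a : ι} (hp : p a) (hq : ¬ q a) :
    #{i | q i} < #{i | p i} := by
  refine card_lt_card <| (ssubset_iff_of_subset fun j hj => ?_).2 ⟨a, ?_, ?_⟩ <;>
    simp_all

noncomputable def updateState (s : LState P A) (u : ℝ) : LState P A :=
  match s.1 with
  | .C => if s.2.2 ≤ u then (.C, s.2.1, u) else (.W, s.2.1, s.2.2)
  | .W => if s.2.2 ≤ u then (.C, s.2.1, s.2.2) else (.D, none, 0)
  | .D => (.D, none, 0)

section updateState

variable {s : LState P A} {u : ℝ}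

theorem updateState_of_fst_eq_D (h : s.1 = .D) : updateState s u = (.D, none, 0) := by
  simp [updateState, h]

theorem updateState_snd_of_fst_eq_D (h : (updateState s u).1 = .D) :
    (updateState s u).2 = (none, 0) := by
  grind [updateState]

theorem updateState_snd_fst (hD : (updateState s u).1 = .D → s.1 = .D)
    (hv : s.1 = .D → s.2.1 = none) : (updateState s u).2.1 = s.2.1 := by
  grind [updateState]

theorem isFixedPt_updateState_updateState
    (hD : (updateState (updateState s u) u).1 = .D → s.1 = .D) :
    IsFixedPt (updateState · u) (updateState (updateState s u) u) := by
  grind [updateState, IsFixedPt]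

theorem updateState_eq_self (h : updateState s u = s) :
    (s.1 = .C ∧ s.2.2 = u) ∨ s = (.D, none, 0) := by
  grind [updateState]

end updateState

theorem F0_apply (M : Market P A) (x : P → LState P A) (i : P) :
    F0 M x i = updateState (x i) (util M (fun k => (x k).2.1) i) := rfl

section F0

variable (M : Market P A)

theorem validState_F0 (x : P → LState P A) : ValidState (F0 M x) := fun _ h =>
  Prod.ext_iff.1 (updateState_snd_of_fst_eq_D h)

theorem F0_fst_eq_D {x : P → LState P A} {i : P} (h : (x i).1 = .D) : (F0 M x i).1 = .D := by
  rw [F0_apply, updateState_of_fst_eq_D h]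

theorem util_eq_zero_of_eq_none {a : P → Option A} {i : P} (h : a i = none) : util M a i = 0 := by
  simp [util, matchOf, h, M.OP_none]

theorem F0_snd_fst {x : P → LState P A} (hv : ValidState x)
    (hD : ∀ i, (F0 M x i).1 = .D → (x i).1 = .D) :
    (fun i => (F0 M x i).2.1) = fun i => (x i).2.1 :=
  funext fun i => updateState_snd_fst (hD i) fun h => (hv i h).1

theorem isFixedPt_F0_iterate_two {x : P → LState P A} (hv : ValidState x)
    (hD : ∀ i, ((F0 M)^[2] x i).1 = .D → (x i).1 = .D) :
    IsFixedPt (F0 M) ((F0 M)^[2] x) := by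
  simp only [iterate_succ_apply', iterate_zero_apply] at hD ⊢
  have hD₁ : ∀ i, (F0 M x i).1 = .D → (x i).1 = .D := fun i h => hD i (F0_fst_eq_D M h)
  have hD₂ : ∀ i, (F0 M (F0 M x) i).1 = .D → (F0 M x i).1 = .D := fun i h =>
    F0_fst_eq_D M (hD i h)
  have h₁ := F0_snd_fst M hv hD₁
  have h₂ := F0_snd_fst M (validState_F0 M x) hD₂
  funext i
  have hDi := hD i
  rw [F0_apply M (F0 M x) i, h₁, F0_apply M x i] at hDi
  rw [F0_apply M (F0 M (F0 M x)) i, h₂, F0_apply M (F0 M x) i, h₁, F0_apply M x i]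
  exact isFixedPt_updateState_updateState hDi

theorem aligned_of_isFixedPt {z : P → LState P A} (hz : IsFixedPt (F0 M) z) :
    (∀ i, (z i).1 ≠ .W) ∧ ∀ i, (z i).2.2 = util M (fun k => (z k).2.1) i := by
  have h i := updateState_eq_self ((F0_apply M z i).symm.trans (congrFun hz i))
  refine ⟨fun i => ?_, fun i => ?_⟩ <;> rcases h i with ⟨hC, hu⟩ | hD
  · simp [hC]
  · simp [hD]
  · exact hu
  · rw [util_eq_zero_of_eq_none M (by simp [hD]), hD]

theorem exists_isFixedPt_F0_iterate {x : P → LState P A} (hv : ValidState x) :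
    ∃ k, IsFixedPt (F0 M) ((F0 M)^[k] x) := by
  refine exists_isFixedPt_iterate_of_iterate_lt (f := F0 M) (S := {x | ValidState x})
    (fun x => #{i | (x i).1 ≠ .D}) 2 (fun y _ => validState_F0 M _) (fun y hy => ?_) x hv
  by_cases hD : ∀ i, ((F0 M)^[2] y i).1 = .D → (y i).1 = .D
  · exact .inl (isFixedPt_F0_iterate_two M hy hD)
  · push Not at hD
    obtain ⟨i, hi₂, hi⟩ := hD
    exact .inr (card_filter_lt_card_filter (fun j hj h => hj (F0_fst_eq_D M (F0_fst_eq_D M h)))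
      hi (not_not.2 hi₂))

end F0

theorem f0_converges_to_aligned_general
    (M : Market P A) (x : P → LState P A) :
    ∃ k : ℕ, F0 M ((F0 M)^[k] x) = (F0 M)^[k] x ∧
      (∀ i, (((F0 M)^[k] x) i).1 ≠ Mood.W) ∧
      ∀ i, (((F0 M)^[k] x) i).2.2 =
        util M (fun k' => (((F0 M)^[k] x) k').2.1) i := by
  obtain ⟨k, hk⟩ := exists_isFixedPt_F0_iterate M (validState_F0 M x)
  rw [← iterate_succ_apply] at hk
  exact ⟨k + 1, hk, aligned_of_isFixedPt M hk⟩

/-- The unperturbed learning dynamics converges to an aligned state in finitely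
many steps: from every (valid) initial joint state, some iterate of `F0` is a
fixed point of `F0`; hence the only recurrence classes of the unperturbed process
are the singletons of states in which no proposer is watchful and every
proposer's baseline utility equals the utility received when all play their
baseline actions. -/
theorem f0_converges_to_aligned [Nonempty P] [Nonempty A]
    (M : Market P A) (x : P → LState P A) (hvalid : ValidState x) :
    ∃ k : ℕ, F0 M ((F0 M)^[k] x) = (F0 M)^[k] x ∧
      (∀ i, (((F0 M)^[k] x) i).1 ≠ Mood.W) ∧
      ∀ i, (((F0 M)^[k] x) i).2.2 =
        util M (fun k' => (((F0 M)^[k] x) k').2.1) i :=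
  f0_converges_to_aligned_general M x
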